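/- arXiv:2009.06820 — 6 statements merged into one kernel-verified Lean document; each statement's English description precedes it below -/
import Mathlib

section
/- Let (X,d) be a proper metric space such that for every p ∈ X there exist 0 < r < s so that for every x ∈ X with d(x,p) ≥ s there is z ∈ X with r ≤ d(p,z) ≤ s and d(x,z) ≤ d(x,p). Then the map ι̂ : X → C(X)/ℝ, x ↦ [d(x,·)], is a topological embedding (a homeomorphism onto its image). -/
/-- Two continuous real-valued functions are equivalent iff they differ by a constant.
The quotient `Quotient (constDiffSetoid X)` is `C(X)/ℝ`, carrying the quotient of the
compact-open topology. -/
def constDiffSetoid (X : Type*) [MetricSpace X] : Setoid C(X, ℝ) where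
  r f g := ∃ c : ℝ, ∀ y, f y = g y + c
  iseqv := ⟨fun f => ⟨0, fun y => by simp⟩,
    fun {f g} ⟨c, h⟩ => ⟨-c, fun y => by rw [h y]; ring⟩,
    fun {f g h} ⟨c, hc⟩ ⟨c', hc'⟩ => ⟨c' + c, fun y => by rw [hc y, hc' y]; ring⟩⟩

/-- If `(X,d)` is a proper metric space such that for every `p` there are `0 < r < s` so that
every `x` with `d(x,p) ≥ s` admits `z` with `r ≤ d(p,z) ≤ s` and `d(x,z) ≤ d(x,p)`, then
the map `ι̂ : X → C(X)/ℝ`, `x ↦ [d(x,·)]`, is a topological embedding. -/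
theorem statement1 (X : Type*) [MetricSpace X] [ProperSpace X]
    (h : ∀ p : X, ∃ r s : ℝ, 0 < r ∧ r < s ∧
      ∀ x : X, s ≤ dist x p →
        ∃ z : X, r ≤ dist p z ∧ dist p z ≤ s ∧ dist x z ≤ dist x p) :
    Topology.IsEmbedding (fun x : X =>
      Quotient.mk (constDiffSetoid X)
        ⟨fun y => dist x y, continuous_const.dist continuous_id⟩) := by
  set ι : X → C(X, ℝ) := fun x => ⟨fun y => dist x y, continuous_const.dist continuous_id⟩
    with hι
  set q : C(X, ℝ) → Quotient (constDiffSetoid X) := Quotient.mk (constDiffSetoid X) with hq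
  have hιcont : Continuous ι := by
    apply ContinuousMap.continuous_of_continuous_uncurry
    exact continuous_fst.dist continuous_snd
  have hqcont : Continuous q := continuous_quot_mk
  have hcont : Continuous (q ∘ ι) := hqcont.comp hιcont
  constructor
  · -- inducing
    rw [Topology.isInducing_iff_nhds]
    intro x
    refine le_antisymm ((hcont.tendsto x).le_comap) ?_
    rw [(Metric.nhds_basis_ball (x := x)).ge_iff]
    intro δ hδ
    rw [Filter.mem_comap]
    -- use the hypothesis at x
    obtain ⟨r, s, hr, hrs, hx⟩ := h x
    set ε : ℝ := min δ (r / 3) with hε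
    have hε0 : 0 < ε := lt_min hδ (by linarith)
    set K : Set X := Metric.closedBall x s with hK
    have hKc : IsCompact K := isCompact_closedBall x s
    set W : Set C(X, ℝ) := {g | ∀ y ∈ K, dist (ι x y) (g y) < ε} with hW
    have hWnhds : W ∈ nhds (ι x) := by
      have hb := nhds_basis_uniformity'
        (ContinuousMap.hasBasis_compactConvergenceUniformity (α := X) (β := ℝ)) (x := ι x)
      refine hb.mem_of_mem (i := (K, {p : ℝ × ℝ | dist p.1 p.2 < ε})) ?_
      exact ⟨hKc, Metric.dist_mem_uniformity hε0⟩
    set B : Set C(X, ℝ) := interior W with hB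
    have hBopen : IsOpen B := isOpen_interior
    have hB_mem : ι x ∈ B := mem_interior_iff_mem_nhds.mpr hWnhds
    -- the saturation of B is open
    have hsat : q ⁻¹' (q '' B) = ⋃ c : ℝ, (fun g : C(X, ℝ) => g + ContinuousMap.const X c) ⁻¹' B := by
      ext g
      simp only [Set.mem_preimage, Set.mem_image, Set.mem_iUnion]
      constructor
      · rintro ⟨b, hb, hbg⟩
        obtain ⟨c, hc⟩ := Quotient.exact hbg
        refine ⟨c, ?_⟩
        have : g + ContinuousMap.const X c = b := by
          ext y; simpa using (hc y).symm
        rwa [this]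
      · rintro ⟨c, hc⟩
        refine ⟨g + ContinuousMap.const X c, hc, ?_⟩
        exact Quotient.sound ⟨c, fun y => by simp⟩
    have hSopen : IsOpen (q ⁻¹' (q '' B)) := by
      rw [hsat]
      exact isOpen_iUnion fun c =>
        hBopen.preimage (continuous_id.add continuous_const)
    have hVopen : IsOpen (q '' B) :=
      (isQuotientMap_quot_mk (r := (constDiffSetoid X).r)).isOpen_preimage.mp hSopen
    refine ⟨q '' B, hVopen.mem_nhds ⟨ι x, hB_mem, rfl⟩, ?_⟩
    -- main estimate
    intro x' hx'
    have hx'S : ι x' ∈ q ⁻¹' (q '' B) := hx'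
    rw [hsat] at hx'S
    obtain ⟨c, hc⟩ := Set.mem_iUnion.mp hx'S
    have hcW : ι x' + ContinuousMap.const X c ∈ W := interior_subset hc
    have key : ∀ y, dist x y ≤ s → |dist x' y + c - dist x y| < ε := by
      intro y hy
      have := hcW y (by simpa [hK, Metric.mem_closedBall, dist_comm] using hy)
      simpa [hι, Real.dist_eq, abs_sub_comm] using this
    have hnear : dist x' x < s := by
      by_contra hfar
      push_neg at hfar
      obtain ⟨z, hz1, hz2, hz3⟩ := hx x' hfar
      have h1 := key x (by rw [dist_self]; linarith)
      have h2 := key z hz2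
      rw [abs_lt] at h1 h2
      have hzx : dist x z = dist z x := dist_comm x z
      have hx'z : dist x' z ≤ dist x' x := hz3
      have hεr : ε ≤ r / 3 := min_le_right _ _
      simp only [dist_self] at h1
      -- from h1: |dist x' x + c| < ε so c < ε - dist x' x
      -- from h2: dist x z < dist x' z + c + ε ≤ 2ε < r
      have : dist x z < 2 * ε := by
        have := h2.1
        linarith [h1.2]
      linarith
    have hxx' : dist x' x < ε := by
      have h1 := key x (by rw [dist_self]; linarith)
      have h2 := key x' (by rw [dist_comm]; exact hnear.le)
      rw [abs_lt] at h1 h2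
      simp only [dist_self] at h1 h2
      rw [dist_comm x x'] at h2
      linarith [h1.1, h1.2, h2.1, h2.2]
    exact lt_of_lt_of_le hxx' (min_le_left _ _)
  · -- injective
    intro a b hab
    obtain ⟨c, hc⟩ := Quotient.exact hab
    have h1 := hc a
    have h2 := hc b
    simp only [ContinuousMap.coe_mk] at h1 h2
    rw [dist_self] at h1 h2
    have : dist a b = 0 := by
      linarith [(dist_comm a b : dist a b = dist b a)]
    exact dist_eq_zero.mp this
end

section
/- Let X be a locally compact metric space and let f_n : X → ℝ be continuous functions converging locally uniformly to f∞ : X → ℝ. Then the sublevel sets satisfy: {f∞ < 0} ⊆ Li_{n→∞} {f_n ≤ 0} ⊆ Ls_{n→∞} {f_n ≤ 0} ⊆ {f∞ ≤ 0}. In particular, if the closure of {f∞ < 0} equals {f∞ ≤ 0}, then the Kuratowski limit of {f_n ≤ 0} exists and equals {f∞ ≤ 0}. -/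
/-!
Pointwise convergence puts each point of `{g < 0}` eventually inside `{f n ≤ 0}`, and the
Kuratowski limit inferior is closed because `q ↦ limsup_n d(q, C_n)` is 1-Lipschitz; this gives
the closure statement. At a point `q` of `Ls {f n ≤ 0}` we have `f n y ≤ 0` frequently along
`atTop ×ˢ 𝓝 q`, while locally uniform convergence to the continuous limit `g` makes
`f n y → g q` along that same filter.
-/

open Filter

/-- Kuratowski limit inferior of a sequence of sets in a metric space:
points `q` with `limsup_n d(q, C_n) = 0` (with `d(q,∅) = +∞`). -/
def kurLi {X : Type*} [MetricSpace X] (C : ℕ → Set X) : Set X :=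
  {q | Filter.limsup (fun n => EMetric.infEdist q (C n)) Filter.atTop = 0}

/-- Kuratowski limit superior of a sequence of sets in a metric space:
points `q` with `liminf_n d(q, C_n) = 0` (with `d(q,∅) = +∞`). -/
def kurLs {X : Type*} [MetricSpace X] (C : ℕ → Set X) : Set X :=
  {q | Filter.liminf (fun n => EMetric.infEdist q (C n)) Filter.atTop = 0}

open Topology Metric

section Kuratowski

variable {X : Type*} [MetricSpace X]

theorem mem_kurLi_of_eventually_mem {C : ℕ → Set X} {x : X} (h : ∀ᶠ n in atTop, x ∈ C n) :
    x ∈ kurLi C := by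
  have hzero : ∀ᶠ n in atTop, infEDist x (C n) = 0 := h.mono fun _ => infEDist_zero_of_mem
  exact (limsup_congr hzero).trans (limsup_const 0)

theorem kurLi_subset_kurLs (C : ℕ → Set X) : kurLi C ⊆ kurLs C := fun _ hq =>
  le_antisymm (hq ▸ liminf_le_limsup) zero_le

theorem limsup_infEDist_le_edist_add (C : ℕ → Set X) (p q : X) :
    limsup (fun n => infEDist q (C n)) atTop ≤
      edist q p + limsup (fun n => infEDist p (C n)) atTop :=
  calc limsup (fun n => infEDist q (C n)) atTop
      ≤ limsup (fun n => edist q p + infEDist p (C n)) atTop :=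
        limsup_le_limsup (.of_forall fun _ => infEDist_le_edist_add_infEDist)
    _ = edist q p + limsup (fun n => infEDist p (C n)) atTop :=
        limsup_const_add _ _ _ (by isBoundedDefault) (by isBoundedDefault)

theorem isClosed_kurLi (C : ℕ → Set X) : IsClosed (kurLi C) := by
  refine isClosed_of_closure_subset fun q hq => ?_
  by_contra hq'
  obtain ⟨p, hp, hqp⟩ := EMetric.mem_closure_iff.mp hq _ (pos_iff_ne_zero.mpr hq')
  have hle := limsup_infEDist_le_edist_add C p q
  rw [show limsup (fun n => infEDist p (C n)) atTop = 0 from hp, add_zero] at hle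
  exact hle.not_gt hqp

theorem frequently_mem_of_mem_kurLs {C : ℕ → Set X} {q : X} (hq : q ∈ kurLs C) :
    ∃ᶠ p in atTop ×ˢ 𝓝 q, p.2 ∈ C p.1 := by
  intro hnot
  obtain ⟨s, hs, t, ht, hst⟩ := mem_prod_iff.mp hnot
  obtain ⟨ε, hε, hball⟩ := EMetric.mem_nhds_iff.mp ht
  have hfar : ∀ᶠ n in atTop, ε ≤ infEDist q (C n) :=
    Filter.mem_of_superset hs fun n hn => le_infEDist.mpr fun y hy =>
      not_lt.mp fun hqy => hst (show (n, y) ∈ s ×ˢ t from ⟨hn, hball (mem_eball'.mpr hqy)⟩) hy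
  exact hε.ne' (le_antisymm ((le_liminf_of_le (by isBoundedDefault) hfar).trans_eq hq) zero_le)

end Kuratowski

theorem TendstoLocallyUniformly.tendsto_prod_nhds {ι α β : Type*} [TopologicalSpace α]
    [UniformSpace β] {F : ι → α → β} {f : α → β} {p : Filter ι} {x : α}
    (h : TendstoLocallyUniformly F f p) (hf : ContinuousAt f x) :
    Tendsto (fun q : ι × α => F q.1 q.2) (p ×ˢ 𝓝 x) (𝓝 (f x)) :=
  tendsto_comp_of_locally_uniform_limit hf tendsto_snd fun u hu =>
    (h u hu x).imp fun _ ⟨ht, hev⟩ => ⟨ht, tendsto_fst.eventually hev⟩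

section Sublevel

variable {X : Type*} [MetricSpace X] (f : ℕ → X → ℝ) (g : X → ℝ) (c : ℝ)

theorem setOf_lt_subset_kurLi_setOf_le (hconv : ∀ x, Tendsto (fun n => f n x) atTop (𝓝 (g x))) :
    {x | g x < c} ⊆ kurLi (fun n => {x | f n x ≤ c}) := fun x hx =>
  mem_kurLi_of_eventually_mem (((hconv x).eventually (eventually_lt_nhds hx)).mono fun _ => le_of_lt)

theorem kurLs_setOf_le_subset (hconv : TendstoLocallyUniformly f g atTop) (hg : Continuous g) :
    kurLs (fun n => {x | f n x ≤ c}) ⊆ {x | g x ≤ c} := fun _ hq =>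
  le_of_tendsto_of_frequently (hconv.tendsto_prod_nhds hg.continuousAt)
    (frequently_mem_of_mem_kurLs hq)

end Sublevel

theorem statement3_general {X : Type*} [MetricSpace X]
    (f : ℕ → X → ℝ) (hf : ∀ n, Continuous (f n)) (g : X → ℝ)
    (hconv : TendstoLocallyUniformly f g Filter.atTop) :
    {x | g x < 0} ⊆ kurLi (fun n => {x | f n x ≤ 0}) ∧
    kurLi (fun n => {x | f n x ≤ 0}) ⊆ kurLs (fun n => {x | f n x ≤ 0}) ∧
    kurLs (fun n => {x | f n x ≤ 0}) ⊆ {x | g x ≤ 0} ∧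
    (closure {x | g x < 0} = {x | g x ≤ 0} →
      kurLi (fun n => {x | f n x ≤ 0}) = {x | g x ≤ 0} ∧
      kurLs (fun n => {x | f n x ≤ 0}) = {x | g x ≤ 0}) := by
  have hLi := setOf_lt_subset_kurLi_setOf_le f g 0 fun x =>
    (hconv.tendstoLocallyUniformlyOn (s := Set.univ)).tendsto_at (Set.mem_univ x)
  have hLiLs := kurLi_subset_kurLs fun n => {x | f n x ≤ 0}
  have hLs := kurLs_setOf_le_subset f g 0 hconv (hconv.continuous (.of_forall hf))
  refine ⟨hLi, hLiLs, hLs, fun hcl => ?_⟩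
  have hle : {x | g x ≤ 0} ⊆ kurLi fun n => {x | f n x ≤ 0} :=
    hcl ▸ (isClosed_kurLi _).closure_subset_iff.mpr hLi
  exact ⟨(hLiLs.trans hLs).antisymm hle, hLs.antisymm (hle.trans hLiLs)⟩

/-- For continuous `f_n → f∞` locally uniformly on a locally compact metric space,
`{f∞ < 0} ⊆ Li {f_n ≤ 0} ⊆ Ls {f_n ≤ 0} ⊆ {f∞ ≤ 0}`; in particular if
`closure {f∞ < 0} = {f∞ ≤ 0}`, the Kuratowski limit of `{f_n ≤ 0}` exists and equals
`{f∞ ≤ 0}`. -/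
theorem statement3 {X : Type*} [MetricSpace X] [LocallyCompactSpace X]
    (f : ℕ → X → ℝ) (hf : ∀ n, Continuous (f n)) (g : X → ℝ)
    (hconv : TendstoLocallyUniformly f g Filter.atTop) :
    {x | g x < 0} ⊆ kurLi (fun n => {x | f n x ≤ 0}) ∧
    kurLi (fun n => {x | f n x ≤ 0}) ⊆ kurLs (fun n => {x | f n x ≤ 0}) ∧
    kurLs (fun n => {x | f n x ≤ 0}) ⊆ {x | g x ≤ 0} ∧
    (closure {x | g x < 0} = {x | g x ≤ 0} →
      kurLi (fun n => {x | f n x ≤ 0}) = {x | g x ≤ 0} ∧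
      kurLs (fun n => {x | f n x ≤ 0}) = {x | g x ≤ 0}) :=
  statement3_general f hf g hconv
end

section
/- Let X be a topological space and F a finite family of continuous real-valued functions on X that is strictly monotone, i.e., for every p ∈ X there exists a continuous path γ_p : [-1,1] → X with γ_p(0) = p such that t ↦ f(γ_p(t)) is strictly increasing for every f ∈ F. Then the closure of {x : max_{f∈F} f(x) < 0} equals {x : max_{f∈F} f(x) ≤ 0}. -/
/-- If a finite family of continuous real functions on a topological space is strictly
monotone (through every point there is a path along which all functions of the family are
strictly increasing), then the closure of `{max F < 0}` equals `{max F ≤ 0}`. -/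
theorem statement4 {X : Type*} [TopologicalSpace X] {ι : Type*} [Finite ι] [Nonempty ι]
    (f : ι → X → ℝ) (hf : ∀ i, Continuous (f i))
    (hmono : ∀ p : X, ∃ γ : ℝ → X, ContinuousOn γ (Set.Icc (-1) 1) ∧ γ 0 = p ∧
      ∀ i, StrictMonoOn (fun t => f i (γ t)) (Set.Icc (-1) 1)) :
    closure {x | (⨆ i, f i x) < 0} = {x | (⨆ i, f i x) ≤ 0} := by
  cases nonempty_fintype ι
  have hsup : ∀ x, (⨆ i, f i x) = Finset.univ.sup' Finset.univ_nonempty (fun i => f i x) := by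
    intro x
    rw [Finset.sup'_univ_eq_ciSup]
  have hbdd : ∀ x, BddAbove (Set.range fun i => f i x) := fun x => Set.finite_range _ |>.bddAbove
  have hgcont : Continuous fun x => ⨆ i, f i x := by
    simp only [hsup]
    exact Continuous.finset_sup'_apply Finset.univ_nonempty (fun i _ => hf i)
  apply Set.Subset.antisymm
  · have : IsClosed {x | (⨆ i, f i x) ≤ 0} := isClosed_le hgcont continuous_const
    exact closure_minimal (fun x hx => le_of_lt (Set.mem_setOf_eq ▸ hx)) this
  · intro p hp
    obtain ⟨γ, hγc, hγ0, hγm⟩ := hmono p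
    have h0mem : (0 : ℝ) ∈ Set.Icc (-1 : ℝ) 1 := by constructor <;> norm_num
    -- along t ∈ Ico (-1) 0, sup < 0
    have hsub : ∀ t ∈ Set.Ico (-1 : ℝ) 0, γ t ∈ {x | (⨆ i, f i x) < 0} := by
      intro t ht
      have htmem : t ∈ Set.Icc (-1 : ℝ) 1 := ⟨ht.1, le_trans ht.2.le (by norm_num)⟩
      have : (⨆ i, f i (γ t)) < 0 := by
        rw [hsup, Finset.sup'_lt_iff]
        intro i _
        have hlt : f i (γ t) < f i (γ 0) := hγm i htmem h0mem ht.2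
        have hle : f i p ≤ ⨆ j, f j p := le_ciSup (hbdd p) i
        rw [hγ0] at hlt
        exact lt_of_lt_of_le hlt (le_trans hle hp)
      exact this
    have hne : Filter.NeBot (nhdsWithin (0 : ℝ) (Set.Ico (-1) 0)) :=
      right_nhdsWithin_Ico_neBot (by norm_num)
    have htend : Filter.Tendsto γ (nhdsWithin 0 (Set.Ico (-1) 0)) (nhds p) := by
      rw [← hγ0]
      exact (hγc 0 h0mem).mono_left (nhdsWithin_mono _ (fun t ht => ⟨ht.1, le_trans ht.2.le (by norm_num)⟩))
    exact mem_closure_of_tendsto htend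
      (Filter.eventually_of_mem self_mem_nhdsWithin hsub)
end

section
/- Let Q ⊂ ℝ² be an open bounded convex set, fix b > 0, and for λ ≥ 1 define x̄(λ) = inf{x ∈ ℝ : L¹{y : (x,y) ∈ λQ} ≥ b} and Q⁻_λ = {(x,y) ∈ λQ : x ≤ x̄(λ)}. Then sup{L²(Q⁻_λ) : λ ≥ 1} < ∞, where L¹ and L² denote 1- and 2-dimensional Lebesgue measure. -/
open Pointwise MeasureTheory Set

private lemma aux_fubini8 {A : Set (ℝ × ℝ)} (hA : MeasurableSet A) {b m' x₀ : ℝ}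
    (hleft : ∀ p ∈ A, m' ≤ p.1) (hright : ∀ p ∈ A, p.1 ≤ x₀)
    (hsec : ∀ x, m' ≤ x → x < x₀ → volume {y | (x, y) ∈ A} ≤ ENNReal.ofReal b) :
    volume A ≤ ENNReal.ofReal b * ENNReal.ofReal (x₀ - m') := by
  have hae : ∀ᵐ (x : ℝ), x ≠ x₀ := by
    rw [MeasureTheory.ae_iff]
    simpa using measure_singleton x₀
  rw [MeasureTheory.Measure.volume_eq_prod, Measure.prod_apply hA]
  calc ∫⁻ x, volume (Prod.mk x ⁻¹' A)
      ≤ ∫⁻ x, (Icc m' x₀).indicator (fun _ => ENNReal.ofReal b) x := by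
        refine lintegral_mono_ae (hae.mono fun x hx => ?_)
        by_cases hmem : x ∈ Icc m' x₀
        · rw [indicator_of_mem hmem]
          exact hsec x hmem.1 (lt_of_le_of_ne hmem.2 hx)
        · have hemp : Prod.mk x ⁻¹' A = ∅ := by
            ext y
            simp only [mem_preimage, mem_empty_iff_false, iff_false]
            intro hy
            exact hmem ⟨hleft _ hy, hright _ hy⟩
          simp [hemp]
    _ = ENNReal.ofReal b * ENNReal.ofReal (x₀ - m') := by
        rw [lintegral_indicator measurableSet_Icc, setLIntegral_const, Real.volume_Icc, mul_comm]

/-- Let `Q ⊂ ℝ²` be an open bounded convex set and `b > 0`. For `λ ≥ 1` let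
`x̄(λ) = inf {x : L¹{y : (x,y) ∈ λQ} ≥ b}` and `Q⁻_λ = {(x,y) ∈ λQ : x ≤ x̄(λ)}`.
Then `sup {L²(Q⁻_λ) : λ ≥ 1} < ∞`. -/
theorem statement8 (Q : Set (ℝ × ℝ)) (hQo : IsOpen Q) (hQb : Bornology.IsBounded Q)
    (hQc : Convex ℝ Q) (b : ℝ) (hb : 0 < b) :
    (⨆ l ∈ Set.Ici (1 : ℝ),
      volume {p : ℝ × ℝ | p ∈ l • Q ∧
        p.1 ≤ sInf {x : ℝ | ENNReal.ofReal b ≤ volume {y : ℝ | (x, y) ∈ l • Q}}}) < ⊤ := by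
  rcases Q.eq_empty_or_nonempty with hQe | hQne
  · subst hQe
    simp [Set.smul_set_empty]
  obtain ⟨c, hc⟩ := hQne
  obtain ⟨r, hr, hball⟩ := Metric.isOpen_iff.mp hQo c hc
  set m := sInf (Prod.fst '' Q) with hm
  have hbdd : BddBelow (Prod.fst '' Q) :=
    (isBounded_iff_bddBelow_bddAbove.mp (LipschitzWith.prod_fst.isBounded_image hQb)).1
  have hmle : ∀ p ∈ Q, m ≤ p.1 := fun p hp => csInf_le hbdd ⟨p, hp, rfl⟩
  have hcm : m ≤ c.1 := hmle c hc
  set C : ℝ := 1 + b * (c.1 - m) / (2 * r) with hC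
  set M : ENNReal := ENNReal.ofReal ((b / (2 * r)) ^ 2 + 1) * volume Q + ENNReal.ofReal (b * C)
    with hM
  have hMtop : M < ⊤ :=
    ENNReal.add_lt_top.mpr ⟨ENNReal.mul_lt_top ENNReal.ofReal_lt_top hQb.measure_lt_top,
      ENNReal.ofReal_lt_top⟩
  refine lt_of_le_of_lt (iSup₂_le fun l hl => ?_) hMtop
  rw [Set.mem_Ici] at hl
  have hl0 : (0 : ℝ) < l := lt_of_lt_of_le one_pos hl
  set S := {x : ℝ | ENNReal.ofReal b ≤ volume {y : ℝ | (x, y) ∈ l • Q}} with hS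
  set xb := sInf S with hxb
  have hAleft : ∀ p : ℝ × ℝ, p ∈ l • Q → l * m ≤ p.1 := by
    rintro p ⟨q, hq, rfl⟩
    simpa [smul_eq_mul] using mul_le_mul_of_nonneg_left (hmle q hq) hl0.le
  have hSbdd : BddBelow S := by
    refine ⟨l * m, fun s hs => ?_⟩
    simp only [hS, mem_setOf_eq] at hs
    have hne : {y : ℝ | (s, y) ∈ l • Q}.Nonempty := by
      rcases eq_empty_or_nonempty {y : ℝ | (s, y) ∈ l • Q} with h | h
      · rw [h] at hs
        simp [ENNReal.ofReal_pos.mpr hb, (ENNReal.ofReal_pos.mpr hb).not_ge] at hs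
      · exact h
    obtain ⟨y, hy⟩ := hne
    exact hAleft (s, y) hy
  by_cases h2 : b ≤ 2 * l * r
  · -- main case : construct a witness in S close to the left edge
    have hmQ : (Prod.fst '' Q).Nonempty := ⟨c.1, c, hc, rfl⟩
    obtain ⟨u, ⟨p₀, hp₀, hup⟩, hu⟩ := exists_lt_of_csInf_lt hmQ
      (lt_add_of_pos_right m (by positivity : (0:ℝ) < 1 / l))
    set t := b / (2 * l * r) with ht
    have ht0 : 0 < t := by positivity
    have ht1 : t ≤ 1 := by rw [div_le_one (by positivity)]; exact h2
    set xs := (1 - t) * (l * p₀.1) + t * (l * c.1) with hxs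
    set yc := (1 - t) * (l * p₀.2) + t * (l * c.2) with hyc
    have hxsS : xs ∈ S := by
      have hsub : Ioo (yc - t * (l * r)) (yc + t * (l * r)) ⊆ {y : ℝ | (xs, y) ∈ l • Q} := by
        intro y hy
        simp only [mem_setOf_eq]
        set z : ℝ × ℝ := (c.1, c.2 + (y - yc) / (t * l)) with hz
        have hzQ : z ∈ Q := by
          apply hball
          rw [Metric.mem_ball, Prod.dist_eq]
          have h1 : dist z.1 c.1 = 0 := by simp [hz]
          have h2 : dist z.2 c.2 < r := by
            rw [hz, Real.dist_eq]
            simp only [add_sub_cancel_left]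
            rw [abs_div, abs_of_pos (by positivity : (0:ℝ) < t * l), div_lt_iff₀ (by positivity)]
            rw [mem_Ioo] at hy
            rw [abs_lt]
            constructor <;> nlinarith
          simp only [sup_lt_iff]
          exact ⟨lt_of_le_of_lt (le_of_eq h1) hr, h2⟩
        have hpt : ((xs, y) : ℝ × ℝ) = (1 - t) • (l • p₀) + t • (l • z) := by
          have htl : t * l ≠ 0 := by positivity
          have h1 : ((1 - t) • (l • p₀) + t • (l • z)).1 = (1 - t) * (l * p₀.1) + t * (l * z.1) := rfl
          have h2 : ((1 - t) • (l • p₀) + t • (l • z)).2 = (1 - t) * (l * p₀.2) + t * (l * z.2) := rfl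
          refine Prod.ext ?_ ?_
          · rw [h1, hz]
          · rw [h2, hz, hyc]
            field_simp
            ring
        rw [hpt]
        exact (hQc.smul l) (smul_mem_smul_set hp₀) (smul_mem_smul_set hzQ)
          (by linarith) ht0.le (by ring)
      have hlen : ENNReal.ofReal b = volume (Ioo (yc - t * (l * r)) (yc + t * (l * r))) := by
        rw [Real.volume_Ioo]
        congr 1
        rw [ht]
        field_simp
        ring
      simp only [hS, mem_setOf_eq]
      rw [hlen]
      exact measure_mono hsub
    have hxble : xb ≤ l * m + C := by
      have h1 : xb ≤ xs := csInf_le hSbdd hxsS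
      have htl : t * l = b / (2 * r) := by rw [ht]; field_simp
      have hu' : l * p₀.1 < l * m + 1 := by
        have : l * p₀.1 < l * (m + 1 / l) := by
          rw [hup]
          exact mul_lt_mul_of_pos_left hu hl0
        have h1l : l * (1 / l) = 1 := by field_simp
        nlinarith
      have hmp : m ≤ p₀.1 := hmle p₀ hp₀
      have key : (b / (2 * r)) * (c.1 - p₀.1) ≤ (b / (2 * r)) * (c.1 - m) :=
        mul_le_mul_of_nonneg_left (by linarith) (by positivity)
      have hxs2 : xs = l * p₀.1 + (t * l) * (c.1 - p₀.1) := by rw [hxs]; ring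
      rw [htl] at hxs2
      have hCv : C = 1 + (b / (2 * r)) * (c.1 - m) := by rw [hC]; ring
      clear_value t m C S xb xs yc
      linarith
    -- now apply the Fubini bound
    have hAmeas : MeasurableSet {p : ℝ × ℝ | p ∈ l • Q ∧ p.1 ≤ xb} := by
      have h1 : IsOpen (l • Q) := hQo.smul₀ hl0.ne'
      exact h1.measurableSet.inter
        ((isClosed_le (continuous_fst) continuous_const).measurableSet)
    have hsec : ∀ x, l * m ≤ x → x < xb →
        volume {y | (x, y) ∈ {p : ℝ × ℝ | p ∈ l • Q ∧ p.1 ≤ xb}} ≤ ENNReal.ofReal b := by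
      intro x hx1 hx2
      have hxS : x ∉ S := fun hxS => absurd (csInf_le hSbdd hxS) (not_le.mpr hx2)
      simp only [hS, mem_setOf_eq, not_le] at hxS
      refine le_trans (measure_mono ?_) hxS.le
      intro y hy
      exact hy.1
    calc volume {p : ℝ × ℝ | p ∈ l • Q ∧ p.1 ≤ xb}
        ≤ ENNReal.ofReal b * ENNReal.ofReal (xb - l * m) :=
          aux_fubini8 hAmeas (fun p hp => hAleft p hp.1) (fun p hp => hp.2) hsec
      _ ≤ ENNReal.ofReal (b * C) := by
          rw [← ENNReal.ofReal_mul hb.le]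
          exact ENNReal.ofReal_le_ofReal
            (mul_le_mul_of_nonneg_left (by linarith) hb.le)
      _ ≤ M := le_add_self
  · -- small l : bound by the volume of l • Q
    push_neg at h2
    have hrl : l ≤ b / (2 * r) := by
      rw [le_div_iff₀ (by positivity)]
      nlinarith
    calc volume {p : ℝ × ℝ | p ∈ l • Q ∧ p.1 ≤ xb}
        ≤ volume (l • Q) := measure_mono fun p hp => hp.1
      _ = ENNReal.ofReal |l ^ Module.finrank ℝ (ℝ × ℝ)| * volume Q :=
          Measure.addHaar_smul volume l Q
      _ ≤ ENNReal.ofReal ((b / (2 * r)) ^ 2 + 1) * volume Q := by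
          gcongr
          rw [show Module.finrank ℝ (ℝ × ℝ) = 2 by simp, abs_of_nonneg (by positivity)]
          nlinarith
      _ ≤ M := le_self_add
end

section
/- Let G be a Carnot group with homogeneous distance d and suppose there are L > 0 and a Riemannian distance ρ on G such that |d_e(x) − d_e(y)| ≤ L ρ(x,y) for all x, y in the annulus B(e,2) \ B(e,1/2). Then every horofunction f of (G,d) is constant along the cosets of the commutator subgroup [G,G]: f(xζ) = f(x) for all x ∈ G and ζ ∈ [G,G]. -/
/-!
Rescaling by `1 / d(q, x)` turns `d(q, xζ) - d(q, x)` into `d(q, x)` times the increment of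
`d_e` between a point of the unit sphere and its translate by a central element at Euclidean
distance `|z| / d(q, x)²`. Both points lie in the annulus, so the Lipschitz bound makes the
increment `O(|z| / d(q, x))`, which tends to `0` since `q_n → ∞` forces `d(q_n, x) → ∞`.

The latter holds because `d`-balls are bounded: a bound on `d_e(p)` bounds the commutators of
`p` with the horizontal unit vectors, whose central coordinates are the horizontal coordinates
of `p`, while `d_e` grows like `√|u|` along the center.
-/

/-- The Heisenberg group, coordinatized as `ℝ² × ℝ`. -/
abbrev H : Type := (ℝ × ℝ) × ℝ

/-- The standard symplectic form on the plane. -/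
noncomputable def symp (v w : ℝ × ℝ) : ℝ := v.1 * w.2 - v.2 * w.1

/-- The Heisenberg group multiplication `(v,t)(w,s) = (v+w, t+s+½ω(v,w))`. -/
noncomputable def Hmul (p q : H) : H := (p.1 + q.1, p.2 + q.2 + symp p.1 q.1 / 2)

/-- Inversion in the Heisenberg group. -/
noncomputable def Hinv (p : H) : H := (-p.1, -p.2)

/-- The homogeneous dilations `δ_λ(v,t) = (λv, λ²t)` of the Heisenberg group. -/
noncomputable def Hdil (l : ℝ) (p : H) : H := (l • p.1, l ^ 2 * p.2)

open Filter Topology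

lemma Hmul_zero (a : H) : Hmul a 0 = a := by
  simp [Hmul, symp]

lemma Hmul_Hinv (a : H) : Hmul a (Hinv a) = 0 := by
  simp [Hmul, Hinv, symp]; ring

lemma Hinv_Hmul (a : H) : Hmul (Hinv a) a = 0 := by
  simp [Hmul, Hinv, symp]; ring

lemma Hmul_assoc (a b c : H) : Hmul (Hmul a b) c = Hmul a (Hmul b c) := by
  simp only [Hmul, symp, Prod.fst_add, Prod.snd_add, Prod.mk.injEq]
  exact ⟨add_assoc _ _ _, by ring⟩

lemma Hdil_zero (l : ℝ) : Hdil l 0 = 0 := by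
  simp [Hdil]

lemma Hdil_Hmul (l : ℝ) (a b : H) : Hdil l (Hmul a b) = Hmul (Hdil l a) (Hdil l b) := by
  simp only [Hdil, Hmul, symp, smul_add, Prod.smul_fst, Prod.smul_snd, smul_eq_mul,
    Prod.mk.injEq, true_and]
  ring

lemma Hdil_horizontal (l : ℝ) (w : ℝ × ℝ) : Hdil l (w, 0) = (l • w, 0) := by
  simp [Hdil]

lemma Hdil_center (l u : ℝ) : Hdil l ((0 : ℝ × ℝ), u) = ((0 : ℝ × ℝ), l ^ 2 * u) := by
  simp [Hdil]

lemma Hinv_center (u : ℝ) : Hinv ((0 : ℝ × ℝ), u) = ((0 : ℝ × ℝ), -u) := by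
  simp [Hinv]

lemma Hmul_center (a : H) (u : ℝ) : Hmul a ((0 : ℝ × ℝ), u) = (a.1, a.2 + u) := by
  simp [Hmul, symp]

lemma Hmul_neg_horizontal (p : H) : Hmul p (-p.1, 0) = ((0 : ℝ × ℝ), p.2) := by
  simp only [Hmul, symp, Prod.fst_neg, Prod.snd_neg, add_neg_cancel, Prod.mk.injEq, true_and]
  ring

lemma Hcommutator_eq_center (p q : H) :
    Hmul (Hmul (Hmul p q) (Hinv p)) (Hinv q) = ((0 : ℝ × ℝ), symp p.1 q.1) := by
  simp only [Hmul, Hinv, symp, Prod.fst_add, Prod.snd_add, Prod.fst_neg, Prod.snd_neg,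
    Prod.mk.injEq]
  constructor
  · abel
  · ring

lemma dist_horizontal (a b : ℝ) (w : ℝ × ℝ) :
    dist ((a • w, 0) : H) (b • w, 0) = |a - b| * ‖w‖ := by
  rw [Prod.dist_eq, dist_self, dist_eq_norm, ← sub_smul, norm_smul, Real.norm_eq_abs]
  exact max_eq_left (by positivity)

lemma dist_Hmul_center (a : H) (u : ℝ) : dist a (Hmul a ((0 : ℝ × ℝ), u)) = |u| := by
  rw [Hmul_center, Prod.dist_eq, dist_self, Real.dist_eq, sub_add_cancel_left, abs_neg]
  exact max_eq_right (abs_nonneg u)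

structure IsHomogeneousDist (d : H → H → ℝ) : Prop where
  eq_zero_iff : ∀ x y : H, d x y = 0 ↔ x = y
  symm : ∀ x y : H, d x y = d y x
  triangle : ∀ x y z : H, d x z ≤ d x y + d y z
  left_invariant : ∀ g x y : H, d (Hmul g x) (Hmul g y) = d x y
  dilation : ∀ l : ℝ, 0 < l → ∀ x y : H, d (Hdil l x) (Hdil l y) = l * d x y

def AnnulusLipschitz (d : H → H → ℝ) (L : ℝ) : Prop :=
  ∀ x y : H, 1 / 2 ≤ d 0 x → d 0 x < 2 → 1 / 2 ≤ d 0 y → d 0 y < 2 →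
    |d 0 x - d 0 y| ≤ L * dist x y

namespace IsHomogeneousDist

variable {d : H → H → ℝ} (hd : IsHomogeneousDist d)
include hd

lemma nonneg (x y : H) : 0 ≤ d x y := by
  have := hd.triangle x y x
  rw [(hd.eq_zero_iff x x).2 rfl, hd.symm y x] at this
  linarith

lemma pos_of_ne {x y : H} (h : x ≠ y) : 0 < d x y :=
  (hd.nonneg x y).lt_of_ne' fun h0 => h ((hd.eq_zero_iff x y).1 h0)

lemma eq_zero_Hinv_Hmul (g x : H) : d g x = d 0 (Hmul (Hinv g) x) := by
  rw [← hd.left_invariant (Hinv g) g x, Hinv_Hmul]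

lemma self_Hmul (a b : H) : d a (Hmul a b) = d 0 b := by
  rw [← hd.left_invariant a 0 b, Hmul_zero]

lemma zero_Hmul_le (a b : H) : d 0 (Hmul a b) ≤ d 0 a + d 0 b :=
  (hd.triangle 0 a _).trans_eq (by rw [hd.self_Hmul])

lemma zero_Hinv (a : H) : d 0 (Hinv a) = d 0 a := by
  rw [← hd.self_Hmul a, Hmul_Hinv, hd.symm]

lemma zero_Hdil {l : ℝ} (hl : 0 < l) (p : H) : d 0 (Hdil l p) = l * d 0 p := by
  rw [← hd.dilation l hl, Hdil_zero]

lemma zero_commutator_le (p q : H) :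
    d 0 (Hmul (Hmul (Hmul p q) (Hinv p)) (Hinv q)) ≤ 2 * d 0 p + 2 * d 0 q := by
  have h₁ := hd.zero_Hmul_le (Hmul (Hmul p q) (Hinv p)) (Hinv q)
  have h₂ := hd.zero_Hmul_le (Hmul p q) (Hinv p)
  have h₃ := hd.zero_Hmul_le p q
  rw [hd.zero_Hinv] at h₁ h₂
  linarith

lemma zero_center (u : ℝ) :
    d 0 ((0 : ℝ × ℝ), u) = √|u| * d 0 ((0 : ℝ × ℝ), (1 : ℝ)) := by
  have ray : ∀ s : ℝ, 0 ≤ s → d 0 ((0 : ℝ × ℝ), s) = √s * d 0 ((0 : ℝ × ℝ), (1 : ℝ)) := by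
    intro s hs
    rcases hs.eq_or_lt with rfl | hs
    · rw [Real.sqrt_zero, zero_mul]
      exact (hd.eq_zero_iff 0 0).2 rfl
    · rw [← hd.zero_Hdil (Real.sqrt_pos.2 hs), Hdil_center, Real.sq_sqrt hs.le, mul_one]
  rcases le_total 0 u with hu | hu
  · rw [abs_of_nonneg hu, ray u hu]
  · rw [abs_of_nonpos hu, ← ray (-u) (neg_nonneg.2 hu), ← hd.zero_Hinv, Hinv_center]

lemma abs_le_of_zero_center_le {u B : ℝ} (h : d 0 ((0 : ℝ × ℝ), u) ≤ B) :
    |u| ≤ (B / d 0 ((0 : ℝ × ℝ), (1 : ℝ))) ^ 2 := by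
  have hc : 0 < d 0 ((0 : ℝ × ℝ), (1 : ℝ)) := hd.pos_of_ne (by simp [Prod.ext_iff])
  rw [hd.zero_center, ← le_div_iff₀ hc] at h
  calc |u| = √|u| ^ 2 := (Real.sq_sqrt (abs_nonneg u)).symm
    _ ≤ _ := pow_le_pow_left₀ (Real.sqrt_nonneg _) h 2

end IsHomogeneousDist

namespace IsHomogeneousDist

variable {d : H → H → ℝ} (hd : IsHomogeneousDist d) {L : ℝ} (hLip : AnnulusLipschitz d L)
include hd hLip

lemma zero_horizontal_le (w : ℝ × ℝ) : d 0 (w, 0) ≤ L * ‖w‖ := by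
  set r := d 0 (w, 0)
  rcases eq_or_ne w 0 with rfl | hw
  · rw [show r = 0 from (hd.eq_zero_iff 0 _).2 rfl, norm_zero, mul_zero]
  have hr : 0 < r := hd.pos_of_ne fun h => hw (congrArg Prod.fst h).symm
  have h₁ : d 0 (r⁻¹ • w, 0) = 1 := by
    rw [← Hdil_horizontal, hd.zero_Hdil (inv_pos.2 hr), inv_mul_cancel₀ hr.ne']
  have h₂ : d 0 ((3 / 2 * r⁻¹) • w, 0) = 3 / 2 := by
    rw [← Hdil_horizontal, hd.zero_Hdil (by positivity), mul_assoc, inv_mul_cancel₀ hr.ne',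
      mul_one]
  have hdist : dist ((r⁻¹ • w, 0) : H) ((3 / 2 * r⁻¹) • w, 0) = ‖w‖ / (2 * r) := by
    rw [dist_horizontal, show r⁻¹ - 3 / 2 * r⁻¹ = -(2 * r)⁻¹ by field_simp; ring, abs_neg,
      abs_of_pos (by positivity), inv_mul_eq_div]
  have key := hLip _ _ (by rw [h₁]; norm_num) (by rw [h₁]; norm_num) (by rw [h₂]; norm_num)
    (by rw [h₂]; norm_num)
  rw [h₁, h₂, hdist, mul_div_assoc', le_div_iff₀ (by positivity)] at key
  norm_num at key
  linarith

lemma abs_zero_Hmul_center_sub_le {p : H} (z : ℝ) (hp : 0 < d 0 p)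
    (hfar : 2 * d 0 ((0 : ℝ × ℝ), z) ≤ d 0 p) :
    |d 0 (Hmul p ((0 : ℝ × ℝ), z)) - d 0 p| ≤ L * |z| / d 0 p := by
  set R := d 0 p
  set ζ : H := ((0 : ℝ × ℝ), z)
  have hR : 0 < R⁻¹ := inv_pos.2 hp
  set a := Hdil R⁻¹ p
  set b := Hmul a (Hdil R⁻¹ ζ)
  have ha : d 0 a = 1 := by rw [hd.zero_Hdil hR, inv_mul_cancel₀ hp.ne']
  have hb : d 0 b = R⁻¹ * d 0 (Hmul p ζ) := by rw [← hd.zero_Hdil hR, Hdil_Hmul]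
  have hab : d a b ≤ 1 / 2 := by
    rw [hd.self_Hmul, hd.zero_Hdil hR, inv_mul_le_iff₀ hp]
    linarith
  have hba := hd.symm a b ▸ hab
  have hb₁ : 1 / 2 ≤ d 0 b := by linarith [hd.triangle 0 b a]
  have hb₂ : d 0 b < 2 := by linarith [hd.triangle 0 a b]
  have key := hLip a b (by rw [ha]; norm_num) (by rw [ha]; norm_num) hb₁ hb₂
  have hdist : dist a b = R⁻¹ ^ 2 * |z| := by
    rw [show b = Hmul a ((0 : ℝ × ℝ), R⁻¹ ^ 2 * z) from Hdil_center _ _ ▸ rfl,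
      dist_Hmul_center, abs_mul, abs_of_pos (by positivity)]
  rw [hdist, ha, abs_sub_comm] at key
  calc |d 0 (Hmul p ζ) - R| = R * |d 0 b - 1| := by
        rw [hb, ← abs_of_pos hp, ← abs_mul, abs_of_pos hp, mul_sub, mul_inv_cancel_left₀ hp.ne',
          mul_one]
    _ ≤ R * (L * (R⁻¹ ^ 2 * |z|)) := mul_le_mul_of_nonneg_left key hp.le
    _ = L * |z| / R := by field_simp

lemma abs_Hmul_center_sub_le {g x : H} (z : ℝ) (hpos : 0 < d g x)
    (hfar : 2 * d 0 ((0 : ℝ × ℝ), z) ≤ d g x) :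
    |d g (Hmul x ((0 : ℝ × ℝ), z)) - d g x| ≤ L * |z| / d g x := by
  rw [hd.eq_zero_Hinv_Hmul g x] at hpos hfar ⊢
  rw [hd.eq_zero_Hinv_Hmul, ← Hmul_assoc]
  exact hd.abs_zero_Hmul_center_sub_le hLip z hpos hfar

lemma exists_norm_le_of_zero_le (hL : 0 ≤ L) (M : ℝ) : ∃ C, ∀ p : H, d 0 p ≤ M → ‖p‖ ≤ C := by
  set c := d 0 ((0 : ℝ × ℝ), (1 : ℝ))
  set C₁ := ((2 * M + 2 * L) / c) ^ 2
  refine ⟨max C₁ (((M + L * C₁) / c) ^ 2), fun p hp => ?_⟩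
  have hsymp : ∀ w : ℝ × ℝ, ‖w‖ = 1 → |symp p.1 w| ≤ C₁ := by
    intro w hw
    apply hd.abs_le_of_zero_center_le
    rw [← Hcommutator_eq_center p (w, 0)]
    have := hd.zero_horizontal_le hLip w
    rw [hw, mul_one] at this
    linarith [hd.zero_commutator_le p (w, 0)]
  have h₁ : ‖p.1‖ ≤ C₁ := by
    rw [Prod.norm_def]
    apply max_le
    · simpa [symp] using hsymp (0, 1) (by simp [Prod.norm_def])
    · simpa [symp] using hsymp (1, 0) (by simp [Prod.norm_def])
  have h₂ : ‖p.2‖ ≤ ((M + L * C₁) / c) ^ 2 := by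
    rw [Real.norm_eq_abs]
    apply hd.abs_le_of_zero_center_le
    rw [← Hmul_neg_horizontal]
    have := hd.zero_horizontal_le hLip (-p.1)
    rw [norm_neg] at this
    linarith [hd.zero_Hmul_le p (-p.1, 0), mul_le_mul_of_nonneg_left h₁ hL]
  rw [Prod.norm_def]
  exact max_le_max h₁ h₂

lemma tendsto_atTop_of_tendsto_cocompact (hL : 0 ≤ L) {ι : Type*} {l : Filter ι} {q : ι → H}
    (hq : Tendsto q l (cocompact H)) (x : H) : Tendsto (fun n => d (q n) x) l atTop := by
  refine tendsto_atTop.2 fun M => ?_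
  obtain ⟨C, hC⟩ := hd.exists_norm_le_of_zero_le hLip hL (M + d 0 x)
  filter_upwards [hq (isCompact_closedBall 0 C).compl_mem_cocompact] with n hn
  by_contra! h
  exact hn (mem_closedBall_zero_iff.2 (hC _ (by linarith [hd.triangle 0 x (q n), hd.symm x (q n)])))

end IsHomogeneousDist

/-- The Riemannian distance is modelled by the product distance of `ℝ² × ℝ`, and the
commutator subgroup `[ℍ,ℍ]` is the center `{((0,0),z)}`. -/
theorem statement14 (d : H → H → ℝ)
    (hd_eq : ∀ x y : H, d x y = 0 ↔ x = y)
    (hd_symm : ∀ x y : H, d x y = d y x)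
    (hd_tri : ∀ x y z : H, d x z ≤ d x y + d y z)
    (hli : ∀ g x y : H, d (Hmul g x) (Hmul g y) = d x y)
    (hhom : ∀ l : ℝ, 0 < l → ∀ x y : H, d (Hdil l x) (Hdil l y) = l * d x y)
    (L : ℝ) (hL : 0 < L)
    (hLip : ∀ x y : H, 1 / 2 ≤ d 0 x → d 0 x < 2 → 1 / 2 ≤ d 0 y → d 0 y < 2 →
      |d 0 x - d 0 y| ≤ L * dist x y)
    (f : H → ℝ) (q : ℕ → H)
    (hesc : ∀ K : Set H, IsCompact K → ∀ᶠ n in Filter.atTop, q n ∉ K)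
    (hconv : ∀ K : Set H, IsCompact K → TendstoUniformlyOn
      (fun (n : ℕ) (x : H) => d (q n) x - d (q n) 0) f Filter.atTop K) :
    ∀ (x : H) (z : ℝ), f (Hmul x ((0 : ℝ × ℝ), z)) = f x := by
  intro x z
  set y := Hmul x ((0 : ℝ × ℝ), z)
  have hd : IsHomogeneousDist d := ⟨hd_eq, hd_symm, hd_tri, hli, hhom⟩
  have hR : Tendsto (fun n => d (q n) x) atTop atTop :=
    hd.tendsto_atTop_of_tendsto_cocompact hLip hL.le (hasBasis_cocompact.tendsto_right_iff.2 hesc) x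
  have hlim (w : H) : Tendsto (fun n => d (q n) w - d (q n) 0) atTop (𝓝 (f w)) :=
    (hconv {w} isCompact_singleton).tendsto_at rfl
  have hdiff : Tendsto (fun n => d (q n) y - d (q n) x) atTop (𝓝 (f y - f x)) :=
    ((hlim y).sub (hlim x)).congr fun n => by ring
  have hsmall : Tendsto (fun n => d (q n) y - d (q n) x) atTop (𝓝 0) := by
    refine squeeze_zero_norm' ?_ ((tendsto_const_nhds (x := L * |z|)).div_atTop hR)
    filter_upwards [hR.eventually_gt_atTop 0, hR.eventually_ge_atTop (2 * d 0 ((0 : ℝ × ℝ), z))]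
      with n hpos hfar
    exact hd.abs_Hmul_center_sub_le hLip z hpos hfar
  exact sub_eq_zero.1 (tendsto_nhds_unique hdiff hsmall)
end

section
/- Let Q ⊂ ℝ² be a centrally symmetric convex polygon with vertices v_1, …, v_{2N} in anticlockwise order (v_{k+N} = −v_k), edges e_k = v_{k+1} − v_k, and supporting functionals α_k = ω(e_k, ·)/ω(e_k, v_k), where ω is the standard symplectic form. Define σ_k = α_k^ω − α_{k−1}^ω, where α^ω denotes the symplectic dual (ω(α^ω, ·) = α). Then σ_k is a positive scalar multiple of v_k; precisely σ_k = α_k(σ_k)·v_k with α_k(σ_k) > 0. -/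
/-- The `k`-th edge `e_k = v_{k+1} − v_k` of a polygon with vertices `v`. -/
noncomputable def edgeV {M : ℕ} (v : ZMod M → ℝ × ℝ) (k : ZMod M) : ℝ × ℝ :=
  v (k + 1) - v k

/-- The supporting functional of the `k`-th edge, `α_k = ω(e_k,·)/ω(e_k,v_k)`,
evaluated at `w`. -/
noncomputable def alphaF {M : ℕ} (v : ZMod M → ℝ × ℝ) (k : ZMod M) (w : ℝ × ℝ) : ℝ :=
  symp (edgeV v k) w / symp (edgeV v k) (v k)

/-- The symplectic dual `α_k^ω = e_k / ω(e_k, v_k)`, i.e. the unique vector with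
`ω(α_k^ω, ·) = α_k`. -/
noncomputable def alphaDual {M : ℕ} (v : ZMod M → ℝ × ℝ) (k : ZMod M) : ℝ × ℝ :=
  (symp (edgeV v k) (v k))⁻¹ • edgeV v k

/-- The `k`-th edge `σ_k = α_k^ω − α_{k−1}^ω` of the isoperimetrix. -/
noncomputable def sigmaV {M : ℕ} (v : ZMod M → ℝ × ℝ) (k : ZMod M) : ℝ × ℝ :=
  alphaDual v k - alphaDual v (k - 1)

/-!
Since `α_j = ω(α_j^ω, ·)` and both `α_k` and `α_{k−1}` take the value `1` at `v_k`,
`ω(σ_k, v_k) = 0`, so in the plane `σ_k` is a multiple of `v_k`, the factor being read off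
by `α_k`. That factor is `α_k(σ_k) = ω(α_{k−1}^ω, α_k^ω)
= ω(e_{k−1}, e_k) / (ω(e_{k−1}, v_{k−1}) ω(e_k, v_k))`: a left turn divided by a product of
two negative numbers.
-/

section Symp

variable (u w e : ℝ × ℝ) (c : ℝ)

theorem symp_self : symp u u = 0 := by
  simp only [symp]; ring

theorem neg_symp : -symp u w = symp w u := by
  simp only [symp]; ring

theorem symp_sub_right : symp e (u - w) = symp e u - symp e w := by
  simp only [symp, Prod.fst_sub, Prod.snd_sub]; ring

theorem symp_sub_left : symp (u - w) e = symp u e - symp w e := by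
  simp only [symp, Prod.fst_sub, Prod.snd_sub]; ring

theorem symp_smul_left : symp (c • u) w = c * symp u w := by
  simp only [symp, Prod.smul_fst, Prod.smul_snd, smul_eq_mul]; ring

theorem symp_smul_right : symp u (c • w) = c * symp u w := by
  simp only [symp, Prod.smul_fst, Prod.smul_snd, smul_eq_mul]; ring

variable {u w e}

theorem eq_symp_div_smul_of_symp_eq_zero (hu : symp u w = 0) (he : symp e w ≠ 0) :
    u = (symp e u / symp e w) • w := by
  simp only [symp] at hu he
  ext <;> simp only [symp, Prod.smul_fst, Prod.smul_snd, smul_eq_mul] <;> field_simp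
  · linear_combination e.1 * hu
  · linear_combination e.2 * hu

end Symp

section Polygon

variable {M : ℕ} (v : ZMod M → ℝ × ℝ) (j k : ZMod M)

theorem symp_edgeV_self : symp (edgeV v k) (v k) = symp (v (k + 1)) (v k) := by
  rw [edgeV, symp_sub_left, symp_self, sub_zero]

theorem symp_edgeV_succ : symp (edgeV v k) (v (k + 1)) = symp (v (k + 1)) (v k) := by
  rw [edgeV, symp_sub_left, symp_self, zero_sub, neg_symp]

theorem symp_alphaDual (w : ℝ × ℝ) : symp (alphaDual v k) w = alphaF v k w := by
  rw [alphaDual, symp_smul_left, alphaF, div_eq_inv_mul]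

theorem symp_alphaDual_alphaDual :
    symp (alphaDual v j) (alphaDual v k) =
      symp (edgeV v j) (edgeV v k) / (symp (v (j + 1)) (v j) * symp (v (k + 1)) (v k)) := by
  rw [alphaDual, alphaDual, symp_smul_left, symp_smul_right, symp_edgeV_self, symp_edgeV_self,
    div_eq_inv_mul, mul_inv, mul_assoc]

variable {v k}

theorem alphaF_self (hk : symp (v (k + 1)) (v k) ≠ 0) : alphaF v k (v k) = 1 :=
  div_self (by rwa [symp_edgeV_self])

theorem alphaF_succ (hk : symp (v (k + 1)) (v k) ≠ 0) : alphaF v k (v (k + 1)) = 1 := by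
  rw [alphaF, symp_edgeV_succ, symp_edgeV_self, div_self hk]

theorem symp_sigmaV_self (hk : symp (v (k + 1)) (v k) ≠ 0)
    (hk' : symp (v k) (v (k - 1)) ≠ 0) : symp (sigmaV v k) (v k) = 0 := by
  have hk'' : symp (v (k - 1 + 1)) (v (k - 1)) ≠ 0 := by rwa [sub_add_cancel]
  rw [sigmaV, symp_sub_left, symp_alphaDual, symp_alphaDual, alphaF_self hk]
  nth_rw 2 [← sub_add_cancel k 1]
  rw [alphaF_succ hk'', sub_self]

variable (v k)

theorem alphaF_sigmaV :
    alphaF v k (sigmaV v k) = symp (alphaDual v (k - 1)) (alphaDual v k) := by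
  rw [← symp_alphaDual, sigmaV, symp_sub_right, symp_self, zero_sub, neg_symp]

end Polygon

theorem statement17_general (N : ℕ) (v : ZMod (2 * N) → ℝ × ℝ)
    (hpos : ∀ k : ZMod (2 * N), symp (v (k + 1)) (v k) < 0)
    (hconv : ∀ k : ZMod (2 * N), 0 < symp (edgeV v (k - 1)) (edgeV v k)) :
    ∀ k : ZMod (2 * N),
      sigmaV v k = alphaF v k (sigmaV v k) • v k ∧ 0 < alphaF v k (sigmaV v k) := by
  intro k
  have hprev : symp (v k) (v (k - 1)) < 0 := by simpa using hpos (k - 1)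
  refine ⟨?_, ?_⟩
  · refine eq_symp_div_smul_of_symp_eq_zero
      (symp_sigmaV_self (hpos k).ne hprev.ne) ?_
    rw [symp_edgeV_self]
    exact (hpos k).ne
  · rw [alphaF_sigmaV, symp_alphaDual_alphaDual, sub_add_cancel]
    exact div_pos (hconv k) (mul_pos_of_neg_of_neg hprev (hpos k))

/-- For a centrally symmetric convex polygon `Q` with vertices `v_1,…,v_{2N}` in
anticlockwise order (`v_{k+N} = −v_k`, `ω(v_{k+1},v_k) < 0`, and consecutive edges turn
left: `ω(e_{k−1},e_k) > 0`), the vector `σ_k = α_k^ω − α_{k−1}^ω` is a positive scalar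
multiple of `v_k`; precisely `σ_k = α_k(σ_k)•v_k` with `α_k(σ_k) > 0`. -/
theorem statement17 (N : ℕ) (hN : 0 < N) (v : ZMod (2 * N) → ℝ × ℝ)
    (hsym : ∀ k : ZMod (2 * N), v (k + (N : ZMod (2 * N))) = -v k)
    (hpos : ∀ k : ZMod (2 * N), symp (v (k + 1)) (v k) < 0)
    (hconv : ∀ k : ZMod (2 * N), 0 < symp (edgeV v (k - 1)) (edgeV v k)) :
    ∀ k : ZMod (2 * N),
      sigmaV v k = alphaF v k (sigmaV v k) • v k ∧ 0 < alphaF v k (sigmaV v k) :=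
  statement17_general N v hpos hconv
end
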